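/- Let d ≥ 1, k > 0, let v : ℝ^d → ℂ be twice continuously differentiable, and let β, α : ℝ^d → ℝ be continuously differentiable. Define Lv := k^{−2}Δv + v and Mv := x·∇v − i k β v + α v. Then at every point x ∈ ℝ^d, 2 Re( conj(Mv) · Lv ) = ∇·[ 2 k^{−1} Re( conj(Mv) · k^{−1}∇v ) + ( |v|² − k^{−2}|∇v|² ) x ] − 2 Re( conj(v) ( i ∇β + k^{−1}∇α )·k^{−1}∇v ) − (d − 2α) |v|² − (2α − d + 2) k^{−2} |∇v|². -/

import Mathlib

open Complex

noncomputable section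

/-- Partial derivative (complex-valued) in the `i`-th coordinate direction. -/
def pd (d : ℕ) (i : Fin d) (f : EuclideanSpace ℝ (Fin d) → ℂ) :
    EuclideanSpace ℝ (Fin d) → ℂ :=
  fun x => fderiv ℝ f x (EuclideanSpace.single i 1)

/-- Partial derivative (real-valued) in the `i`-th coordinate direction. -/
def pdR (d : ℕ) (i : Fin d) (f : EuclideanSpace ℝ (Fin d) → ℝ) :
    EuclideanSpace ℝ (Fin d) → ℝ :=
  fun x => fderiv ℝ f x (EuclideanSpace.single i 1)

/-- The Laplacian `Δf = Σᵢ ∂ᵢ²f`. -/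
def lap (d : ℕ) (f : EuclideanSpace ℝ (Fin d) → ℂ) : EuclideanSpace ℝ (Fin d) → ℂ :=
  fun x => ∑ i, pd d i (pd d i f) x

/-- `|∇v|² = Σⱼ |∂ⱼv|²`. -/
def gradSq (d : ℕ) (v : EuclideanSpace ℝ (Fin d) → ℂ) : EuclideanSpace ℝ (Fin d) → ℝ :=
  fun x => ∑ i, ‖pd d i v x‖ ^ 2

/-- The scaled Helmholtz operator `Lv = k⁻²Δv + v`. -/
def Lop (d : ℕ) (k : ℝ) (v : EuclideanSpace ℝ (Fin d) → ℂ) :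
    EuclideanSpace ℝ (Fin d) → ℂ :=
  fun x => ((k ^ 2 : ℝ) : ℂ)⁻¹ * lap d v x + v x

/-- The Morawetz multiplier `M_{β,α}v = x·∇v − i k β v + α v`. -/
def Mop (d : ℕ) (k : ℝ) (β α : EuclideanSpace ℝ (Fin d) → ℝ)
    (v : EuclideanSpace ℝ (Fin d) → ℂ) : EuclideanSpace ℝ (Fin d) → ℂ :=
  fun x => (∑ i, (x i : ℂ) * pd d i v x) - Complex.I * (k : ℂ) * (β x : ℂ) * v x
    + (α x : ℂ) * v x

/-- The `j`-th component of the Morawetz flux vector field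
`2 k⁻¹ Re( conj(M_{β,α}v) · k⁻¹∇v ) + ( |v|² − k⁻²|∇v|² ) x`. -/
def flux (d : ℕ) (k : ℝ) (β α : EuclideanSpace ℝ (Fin d) → ℝ)
    (v : EuclideanSpace ℝ (Fin d) → ℂ) (j : Fin d) : EuclideanSpace ℝ (Fin d) → ℝ :=
  fun x => 2 * k⁻¹ * ((starRingEnd ℂ) (Mop d k β α v x) * (((k⁻¹ : ℝ) : ℂ) * pd d j v x)).re
    + (‖v x‖ ^ 2 - (k⁻¹) ^ 2 * gradSq d v x) * x j

namespace MorAux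

variable {d : ℕ} {x : EuclideanSpace ℝ (Fin d)} {j i : Fin d}
variable {f g : EuclideanSpace ℝ (Fin d) → ℂ} {b c : EuclideanSpace ℝ (Fin d) → ℝ}

lemma pd_add (hf : DifferentiableAt ℝ f x) (hg : DifferentiableAt ℝ g x) :
    pd d j (fun y => f y + g y) x = pd d j f x + pd d j g x := by
  unfold pd; rw [fderiv_fun_add hf hg]; simp

lemma pd_sub (hf : DifferentiableAt ℝ f x) (hg : DifferentiableAt ℝ g x) :
    pd d j (fun y => f y - g y) x = pd d j f x - pd d j g x := by
  unfold pd; rw [fderiv_fun_sub hf hg]; simp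

lemma pd_mul (hf : DifferentiableAt ℝ f x) (hg : DifferentiableAt ℝ g x) :
    pd d j (fun y => f y * g y) x = pd d j f x * g x + f x * pd d j g x := by
  unfold pd; rw [fderiv_fun_mul hf hg]; simp; ring

lemma pd_const_mul (hf : DifferentiableAt ℝ f x) (a : ℂ) :
    pd d j (fun y => a * f y) x = a * pd d j f x := by
  unfold pd; rw [fderiv_const_mul hf]; simp

lemma pd_sum {ι : Type*} (s : Finset ι) {F : ι → EuclideanSpace ℝ (Fin d) → ℂ}
    (h : ∀ i ∈ s, DifferentiableAt ℝ (F i) x) :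
    pd d j (fun y => ∑ i ∈ s, F i y) x = ∑ i ∈ s, pd d j (F i) x := by
  unfold pd; rw [fderiv_fun_sum h]; simp

lemma pd_ofReal (hb : DifferentiableAt ℝ b x) :
    pd d j (fun y => ((b y : ℝ) : ℂ)) x = ((pdR d j b x : ℝ) : ℂ) := by
  unfold pd pdR
  have h : HasFDerivAt (fun y => ((b y : ℝ) : ℂ)) (Complex.ofRealCLM.comp (fderiv ℝ b x)) x :=
    (Complex.ofRealCLM.hasFDerivAt (x := b x)).comp x hb.hasFDerivAt
  rw [h.fderiv]; simp

lemma pd_conj (hf : DifferentiableAt ℝ f x) :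
    pd d j (fun y => (starRingEnd ℂ) (f y)) x = (starRingEnd ℂ) (pd d j f x) := by
  unfold pd
  have h : HasFDerivAt (fun y => (starRingEnd ℂ) (f y))
      (Complex.conjCLE.toContinuousLinearMap.comp (fderiv ℝ f x)) x :=
    (Complex.conjCLE.toContinuousLinearMap.hasFDerivAt (x := f x)).comp x hf.hasFDerivAt
  rw [h.fderiv]; simp

lemma pdR_re (hf : DifferentiableAt ℝ f x) :
    pdR d j (fun y => (f y).re) x = (pd d j f x).re := by
  unfold pd pdR
  have h : HasFDerivAt (fun y => (f y).re) (Complex.reCLM.comp (fderiv ℝ f x)) x :=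
    (Complex.reCLM.hasFDerivAt (x := f x)).comp x hf.hasFDerivAt
  rw [h.fderiv]; simp

lemma pdR_add (hf : DifferentiableAt ℝ b x) (hg : DifferentiableAt ℝ c x) :
    pdR d j (fun y => b y + c y) x = pdR d j b x + pdR d j c x := by
  unfold pdR; rw [fderiv_fun_add hf hg]; simp

lemma pdR_sub (hf : DifferentiableAt ℝ b x) (hg : DifferentiableAt ℝ c x) :
    pdR d j (fun y => b y - c y) x = pdR d j b x - pdR d j c x := by
  unfold pdR; rw [fderiv_fun_sub hf hg]; simp

lemma pdR_mul (hf : DifferentiableAt ℝ b x) (hg : DifferentiableAt ℝ c x) :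
    pdR d j (fun y => b y * c y) x = pdR d j b x * c x + b x * pdR d j c x := by
  unfold pdR; rw [fderiv_fun_mul hf hg]; simp; ring

lemma pdR_const_mul (hf : DifferentiableAt ℝ b x) (a : ℝ) :
    pdR d j (fun y => a * b y) x = a * pdR d j b x := by
  unfold pdR; rw [fderiv_const_mul hf]; simp

lemma pdR_sum {ι : Type*} (s : Finset ι) {F : ι → EuclideanSpace ℝ (Fin d) → ℝ}
    (h : ∀ i ∈ s, DifferentiableAt ℝ (F i) x) :
    pdR d j (fun y => ∑ i ∈ s, F i y) x = ∑ i ∈ s, pdR d j (F i) x := by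
  unfold pdR; rw [fderiv_fun_sum h]; simp

lemma diff_coord (i : Fin d) : Differentiable ℝ (fun y : EuclideanSpace ℝ (Fin d) => y i) :=
  (EuclideanSpace.proj (𝕜 := ℝ) i).differentiable

lemma pdR_coord : pdR d j (fun y => y i) x = if i = j then 1 else 0 := by
  unfold pdR
  rw [show (fun y : EuclideanSpace ℝ (Fin d) => y i) = ⇑(EuclideanSpace.proj (𝕜 := ℝ) i) from rfl,
    ContinuousLinearMap.fderiv]
  simp [EuclideanSpace.single_apply]

lemma norm_sq_re (z : ℂ) : ‖z‖ ^ 2 = ((starRingEnd ℂ) z * z).re := by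
  simp [Complex.mul_re, Complex.sq_norm,
    Complex.normSq_apply]

lemma diff_conj (hf : Differentiable ℝ f) :
    Differentiable ℝ (fun y => (starRingEnd ℂ) (f y)) :=
  Complex.conjCLE.toContinuousLinearMap.differentiable.comp hf

lemma diff_norm_sq (hf : Differentiable ℝ f) : Differentiable ℝ (fun y => ‖f y‖ ^ 2) := by
  have e : (fun y => ‖f y‖ ^ 2) = fun y => ((starRingEnd ℂ) (f y) * f y).re :=
    funext fun y => norm_sq_re _
  rw [e]
  exact Complex.reCLM.differentiable.comp ((diff_conj hf).mul hf)

lemma pdR_norm_sq (hf : Differentiable ℝ f) :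
    pdR d j (fun y => ‖f y‖ ^ 2) x = 2 * ((starRingEnd ℂ) (f x) * pd d j f x).re := by
  have e : (fun y => ‖f y‖ ^ 2) = fun y => ((starRingEnd ℂ) (f y) * f y).re :=
    funext fun y => norm_sq_re _
  rw [e, pdR_re (f := fun y => (starRingEnd ℂ) (f y) * f y) ((diff_conj hf x).mul (hf x)),
    pd_mul (f := fun y => (starRingEnd ℂ) (f y)) (diff_conj hf x) (hf x), pd_conj (hf x)]
  simp [Complex.add_re, Complex.mul_re]
  ring

lemma diff_pd {v : EuclideanSpace ℝ (Fin d) → ℂ} (hv : ContDiff ℝ 2 v) (i : Fin d) :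
    Differentiable ℝ (pd d i v) := by
  have h1 : Differentiable ℝ (fderiv ℝ v) :=
    (hv.fderiv_right (m := 1) (by norm_num)).differentiable one_ne_zero
  exact (ContinuousLinearMap.apply ℝ ℂ (EuclideanSpace.single i 1)).differentiable.comp h1

lemma pd_symm {v : EuclideanSpace ℝ (Fin d) → ℂ} (hv : ContDiff ℝ 2 v) (i j : Fin d) :
    pd d i (pd d j v) x = pd d j (pd d i v) x := by
  have h1 : Differentiable ℝ (fderiv ℝ v) :=
    (hv.fderiv_right (m := 1) (by norm_num)).differentiable one_ne_zero
  have key : ∀ (w : EuclideanSpace ℝ (Fin d)),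
      fderiv ℝ (fun y => fderiv ℝ v y w) x
        = ((ContinuousLinearMap.apply ℝ ℂ w).comp (fderiv ℝ (fderiv ℝ v) x)) := fun w =>
    (((ContinuousLinearMap.apply ℝ ℂ w).hasFDerivAt).comp x (h1 x).hasFDerivAt).fderiv
  show fderiv ℝ (fun y => fderiv ℝ v y (EuclideanSpace.single j 1)) x (EuclideanSpace.single i 1)
      = fderiv ℝ (fun y => fderiv ℝ v y (EuclideanSpace.single i 1)) x (EuclideanSpace.single j 1)
  rw [key, key]
  exact second_derivative_symmetric (f' := fderiv ℝ v)
    (fun y => ((hv.differentiable (by norm_num)) y).hasFDerivAt) ((h1 x).hasFDerivAt) _ _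

lemma re_conj_swap (a z : ℂ) : ((starRingEnd ℂ) a * z).re = ((starRingEnd ℂ) z * a).re := by
  simp [Complex.mul_re]; ring

end MorAux

/-- **Morawetz identity for the Helmholtz operator.**
For `v ∈ C²(ℝ^d, ℂ)`, `β, α ∈ C¹(ℝ^d, ℝ)` and `k > 0`, at every point `x`,
`2 Re( conj(M_{β,α}v) Lv ) = ∇·[ 2k⁻¹ Re( conj(M_{β,α}v) k⁻¹∇v ) + (|v|² − k⁻²|∇v|²) x ]
 − 2 Re( conj(v) (i∇β + k⁻¹∇α)·k⁻¹∇v ) − (d − 2α)|v|² − (2α − d + 2)k⁻²|∇v|²`. -/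
theorem morawetz_identity
    {d : ℕ} (hd : 1 ≤ d) (k : ℝ) (hk : 0 < k)
    (v : EuclideanSpace ℝ (Fin d) → ℂ) (hv : ContDiff ℝ 2 v)
    (β α : EuclideanSpace ℝ (Fin d) → ℝ) (hβ : ContDiff ℝ 1 β) (hα : ContDiff ℝ 1 α)
    (x : EuclideanSpace ℝ (Fin d)) :
    2 * ((starRingEnd ℂ) (Mop d k β α v x) * Lop d k v x).re
      = (∑ j, pdR d j (flux d k β α v j) x)
        - 2 * ((starRingEnd ℂ) (v x) *
            ∑ j, (Complex.I * (pdR d j β x : ℂ) + ((k⁻¹ : ℝ) : ℂ) * (pdR d j α x : ℂ)) *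
              (((k⁻¹ : ℝ) : ℂ) * pd d j v x)).re
        - ((d : ℝ) - 2 * α x) * ‖v x‖ ^ 2
        - (2 * α x - (d : ℝ) + 2) * (k⁻¹) ^ 2 * gradSq d v x := by
  classical
  open MorAux in
  have hk0 : (k : ℝ) ≠ 0 := ne_of_gt hk
  -- differentiability facts
  have hv1 : Differentiable ℝ v := hv.differentiable (by norm_num)
  have hpv : ∀ i, Differentiable ℝ (pd d i v) := diff_pd hv
  have hβ1 : Differentiable ℝ β := hβ.differentiable one_ne_zero
  have hα1 : Differentiable ℝ α := hα.differentiable one_ne_zero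
  have hofβ : Differentiable ℝ (fun y => ((β y : ℝ) : ℂ)) :=
    Complex.ofRealCLM.differentiable.comp hβ1
  have hofα : Differentiable ℝ (fun y => ((α y : ℝ) : ℂ)) :=
    Complex.ofRealCLM.differentiable.comp hα1
  have hco : ∀ i : Fin d, Differentiable ℝ (fun y : EuclideanSpace ℝ (Fin d) => ((y i : ℝ) : ℂ)) :=
    fun i => Complex.ofRealCLM.differentiable.comp (diff_coord i)
  have hterm : ∀ i : Fin d, Differentiable ℝ (fun y => ((y i : ℝ) : ℂ) * pd d i v y) :=
    fun i => (hco i).mul (hpv i)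
  have hsum1 : Differentiable ℝ (fun y => ∑ i, ((y i : ℝ) : ℂ) * pd d i v y) :=
    Differentiable.fun_sum (fun i _ => hterm i)
  have h2d : Differentiable ℝ (fun y => Complex.I * (k : ℂ) * ((β y : ℝ) : ℂ) * v y) :=
    ((hofβ.const_mul (Complex.I * (k : ℂ))).mul hv1)
  have h3d : Differentiable ℝ (fun y => ((α y : ℝ) : ℂ) * v y) := hofα.mul hv1
  have hMd : Differentiable ℝ (Mop d k β α v) := (hsum1.sub h2d).add h3d
  have hgradd : Differentiable ℝ (gradSq d v) :=
    Differentiable.fun_sum (fun i _ => diff_norm_sq (hpv i))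
  -- first partials of Mop
  have hpdM : ∀ j, pd d j (Mop d k β α v) x
      = pd d j v x + (∑ i, ((x i : ℝ) : ℂ) * pd d j (pd d i v) x)
        - Complex.I * (k : ℂ) * ((pdR d j β x : ℝ) : ℂ) * v x
        - Complex.I * (k : ℂ) * ((β x : ℝ) : ℂ) * pd d j v x
        + ((pdR d j α x : ℝ) : ℂ) * v x + ((α x : ℝ) : ℂ) * pd d j v x := by
    intro j
    have e1 : pd d j (Mop d k β α v) x
        = pd d j (fun y => (∑ i, ((y i : ℝ) : ℂ) * pd d i v y)
            - Complex.I * (k : ℂ) * ((β y : ℝ) : ℂ) * v y) x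
          + pd d j (fun y => ((α y : ℝ) : ℂ) * v y) x :=
      pd_add ((hsum1.sub h2d) x) (h3d x)
    have e2 : pd d j (fun y => (∑ i, ((y i : ℝ) : ℂ) * pd d i v y)
          - Complex.I * (k : ℂ) * ((β y : ℝ) : ℂ) * v y) x
        = pd d j (fun y => ∑ i, ((y i : ℝ) : ℂ) * pd d i v y) x
          - pd d j (fun y => Complex.I * (k : ℂ) * ((β y : ℝ) : ℂ) * v y) x :=
      pd_sub (hsum1 x) (h2d x)
    have e3 : pd d j (fun y => ∑ i, ((y i : ℝ) : ℂ) * pd d i v y) x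
        = ∑ i, pd d j (fun y => ((y i : ℝ) : ℂ) * pd d i v y) x :=
      pd_sum Finset.univ (fun i _ => hterm i x)
    have e4 : ∀ i : Fin d, pd d j (fun y => ((y i : ℝ) : ℂ) * pd d i v y) x
        = (((if i = j then (1:ℝ) else 0) : ℝ) : ℂ) * pd d i v x
          + ((x i : ℝ) : ℂ) * pd d j (pd d i v) x := by
      intro i
      rw [pd_mul (f := fun y => ((y i : ℝ) : ℂ)) (g := pd d i v) (hco i x) (hpv i x),
        pd_ofReal (b := fun y => y i) (diff_coord i x), pdR_coord]
    have e5 : pd d j (fun y => Complex.I * (k : ℂ) * ((β y : ℝ) : ℂ) * v y) x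
        = Complex.I * (k : ℂ)
            * (((pdR d j β x : ℝ) : ℂ) * v x + ((β x : ℝ) : ℂ) * pd d j v x) := by
      have e5a : pd d j (fun y => (Complex.I * (k : ℂ) * ((β y : ℝ) : ℂ)) * v y) x
          = pd d j (fun y => Complex.I * (k : ℂ) * ((β y : ℝ) : ℂ)) x * v x
            + (Complex.I * (k : ℂ) * ((β x : ℝ) : ℂ)) * pd d j v x :=
        pd_mul (f := fun y => Complex.I * (k : ℂ) * ((β y : ℝ) : ℂ)) (g := v)
          ((hofβ.const_mul (Complex.I * (k : ℂ))) x) (hv1 x)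
      have e5b : pd d j (fun y => Complex.I * (k : ℂ) * ((β y : ℝ) : ℂ)) x
          = Complex.I * (k : ℂ) * ((pdR d j β x : ℝ) : ℂ) := by
        rw [pd_const_mul (f := fun y => ((β y : ℝ) : ℂ)) (hofβ x) (Complex.I * (k : ℂ)),
          pd_ofReal (hβ1 x)]
      rw [e5a, e5b]; ring
    have e6 : pd d j (fun y => ((α y : ℝ) : ℂ) * v y) x
        = ((pdR d j α x : ℝ) : ℂ) * v x + ((α x : ℝ) : ℂ) * pd d j v x := by
      rw [pd_mul (f := fun y => ((α y : ℝ) : ℂ)) (g := v) (hofα x) (hv1 x),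
        pd_ofReal (hα1 x)]
    rw [e1, e2, e3, Finset.sum_congr rfl (fun i _ => e4 i), e5, e6,
      Finset.sum_add_distrib]
    have e7 : (∑ i, (((if i = j then (1:ℝ) else 0) : ℝ) : ℂ) * pd d i v x) = pd d j v x := by
      rw [Finset.sum_congr rfl (fun i _ => by
        rw [show ((((if i = j then (1:ℝ) else 0)) : ℝ) : ℂ) * pd d i v x
          = if i = j then pd d i v x else 0 from by split <;> simp])]
      simp
    rw [e7]; ring
  -- per-coordinate derivative of the flux
  have hfluxj : ∀ j, pdR d j (flux d k β α v j) x
      = 2 * (k⁻¹) ^ 2 * ((starRingEnd ℂ) (Mop d k β α v x) * pd d j (pd d j v) x).re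
        + (2 + 2 * α x) * (k⁻¹) ^ 2 * ‖pd d j v x‖ ^ 2
        + 2 * (k⁻¹) ^ 2 * ((starRingEnd ℂ) (∑ i, ((x i : ℝ) : ℂ) * pd d j (pd d i v) x)
            * pd d j v x).re
        + 2 * ((starRingEnd ℂ) (v x) * ((Complex.I * ((pdR d j β x : ℝ) : ℂ)
            + ((k⁻¹ : ℝ) : ℂ) * ((pdR d j α x : ℝ) : ℂ)) * (((k⁻¹ : ℝ) : ℂ) * pd d j v x))).re
        + 2 * ((starRingEnd ℂ) (v x) * pd d j v x).re * x j
        - (k⁻¹) ^ 2 * (∑ i, 2 * ((starRingEnd ℂ) (pd d i v x) * pd d j (pd d i v) x).re) * x j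
        + (‖v x‖ ^ 2 - (k⁻¹) ^ 2 * gradSq d v x) := by
    intro j
    have hApre : Differentiable ℝ (fun y =>
        (starRingEnd ℂ) (Mop d k β α v y) * (((k⁻¹ : ℝ) : ℂ) * pd d j v y)) :=
      (diff_conj hMd).mul ((hpv j).const_mul _)
    have hAd : Differentiable ℝ (fun y =>
        ((starRingEnd ℂ) (Mop d k β α v y) * (((k⁻¹ : ℝ) : ℂ) * pd d j v y)).re) :=
      Complex.reCLM.differentiable.comp hApre
    have hBinner : Differentiable ℝ (fun y => ‖v y‖ ^ 2 - (k⁻¹) ^ 2 * gradSq d v y) :=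
      (diff_norm_sq hv1).sub (hgradd.const_mul _)
    have s1 : pdR d j (flux d k β α v j) x
        = pdR d j (fun y => 2 * k⁻¹
            * ((starRingEnd ℂ) (Mop d k β α v y) * (((k⁻¹ : ℝ) : ℂ) * pd d j v y)).re) x
          + pdR d j (fun y => (‖v y‖ ^ 2 - (k⁻¹) ^ 2 * gradSq d v y) * y j) x :=
      pdR_add ((hAd.const_mul (2 * k⁻¹)) x) ((hBinner.mul (diff_coord j)) x)
    have s2 : pdR d j (fun y => 2 * k⁻¹
          * ((starRingEnd ℂ) (Mop d k β α v y) * (((k⁻¹ : ℝ) : ℂ) * pd d j v y)).re) x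
        = 2 * k⁻¹ * ((starRingEnd ℂ) (pd d j (Mop d k β α v) x)
              * (((k⁻¹ : ℝ) : ℂ) * pd d j v x)
            + (starRingEnd ℂ) (Mop d k β α v x)
              * (((k⁻¹ : ℝ) : ℂ) * pd d j (pd d j v) x)).re := by
      rw [pdR_const_mul (b := fun y =>
          ((starRingEnd ℂ) (Mop d k β α v y) * (((k⁻¹ : ℝ) : ℂ) * pd d j v y)).re)
          (hAd x) (2 * k⁻¹),
        pdR_re (f := fun y =>
          (starRingEnd ℂ) (Mop d k β α v y) * (((k⁻¹ : ℝ) : ℂ) * pd d j v y)) (hApre x),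
        pd_mul (f := fun y => (starRingEnd ℂ) (Mop d k β α v y))
          (g := fun y => ((k⁻¹ : ℝ) : ℂ) * pd d j v y)
          ((diff_conj hMd) x) (((hpv j).const_mul _) x),
        pd_conj (hMd x), pd_const_mul (hpv j x) (((k⁻¹ : ℝ) : ℂ)), Complex.add_re]
    have s3 : pdR d j (fun y => (‖v y‖ ^ 2 - (k⁻¹) ^ 2 * gradSq d v y) * y j) x
        = (2 * ((starRingEnd ℂ) (v x) * pd d j v x).re
            - (k⁻¹) ^ 2 * ∑ i, 2 * ((starRingEnd ℂ) (pd d i v x) * pd d j (pd d i v) x).re)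
              * x j
          + (‖v x‖ ^ 2 - (k⁻¹) ^ 2 * gradSq d v x) := by
      have t1 : pdR d j (gradSq d v) x
          = ∑ i, 2 * ((starRingEnd ℂ) (pd d i v x) * pd d j (pd d i v) x).re := by
        have t1a : pdR d j (gradSq d v) x = ∑ i, pdR d j (fun y => ‖pd d i v y‖ ^ 2) x :=
          pdR_sum Finset.univ (fun i _ => (diff_norm_sq (hpv i)) x)
        rw [t1a]
        exact Finset.sum_congr rfl (fun i _ => pdR_norm_sq (hpv i))
      rw [pdR_mul (hf := hBinner x) (hg := diff_coord j x),
        pdR_sub (hf := (diff_norm_sq hv1) x) (hg := (hgradd.const_mul ((k⁻¹)^2)) x),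
        pdR_norm_sq hv1, pdR_const_mul (hgradd x) ((k⁻¹)^2), t1,
        pdR_coord, if_pos rfl, mul_one]
    rw [s1, s2, s3, hpdM j, norm_sq_re (pd d j v x)]
    simp only [map_add, map_sub, map_mul, Complex.conj_ofReal, Complex.conj_I,
      Complex.add_re, Complex.sub_re, Complex.mul_re, Complex.add_im, Complex.sub_im,
      Complex.mul_im, Complex.I_re, Complex.I_im, Complex.ofReal_re, Complex.ofReal_im,
      Complex.conj_re, Complex.conj_im, Complex.neg_re, Complex.neg_im]
    field_simp
    ring
  -- main cancellation of double sums (uses symmetry of second derivatives)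
  have hcancel :
      (∑ j, 2 * (k⁻¹) ^ 2 * ((starRingEnd ℂ) (∑ i, ((x i : ℝ) : ℂ) * pd d j (pd d i v) x)
          * pd d j v x).re)
      = ∑ j, (k⁻¹) ^ 2
          * (∑ i, 2 * ((starRingEnd ℂ) (pd d i v x) * pd d j (pd d i v) x).re) * x j := by
    have step1 : ∀ j : Fin d,
        2 * (k⁻¹) ^ 2 * ((starRingEnd ℂ) (∑ i, ((x i : ℝ) : ℂ) * pd d j (pd d i v) x)
          * pd d j v x).re
        = ∑ i, 2 * (k⁻¹) ^ 2 * x i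
            * ((starRingEnd ℂ) (pd d j (pd d i v) x) * pd d j v x).re := by
      intro j
      rw [map_sum, Finset.sum_mul, Complex.re_sum, Finset.mul_sum]
      exact Finset.sum_congr rfl (fun i _ => by
        rw [map_mul, Complex.conj_ofReal]
        simp only [Complex.mul_re, Complex.mul_im, Complex.ofReal_re, Complex.ofReal_im]
        ring)
    have step2 : ∀ j : Fin d,
        (k⁻¹) ^ 2 * (∑ i, 2 * ((starRingEnd ℂ) (pd d i v x) * pd d j (pd d i v) x).re) * x j
        = ∑ i, 2 * (k⁻¹) ^ 2 * x j
            * ((starRingEnd ℂ) (pd d i v x) * pd d j (pd d i v) x).re := by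
      intro j
      rw [Finset.mul_sum, Finset.sum_mul]
      exact Finset.sum_congr rfl (fun i _ => by ring)
    rw [Finset.sum_congr rfl (fun j _ => step1 j), Finset.sum_congr rfl (fun j _ => step2 j),
      Finset.sum_comm]
    refine Finset.sum_congr rfl (fun i _ => Finset.sum_congr rfl (fun j _ => ?_))
    rw [pd_symm hv j i, re_conj_swap]
  -- rewrite of the βα term in the goal
  have hβα : 2 * ((starRingEnd ℂ) (v x) *
        ∑ j, (Complex.I * (pdR d j β x : ℂ) + ((k⁻¹ : ℝ) : ℂ) * (pdR d j α x : ℂ)) *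
          (((k⁻¹ : ℝ) : ℂ) * pd d j v x)).re
      = ∑ j, 2 * ((starRingEnd ℂ) (v x) * ((Complex.I * ((pdR d j β x : ℝ) : ℂ)
          + ((k⁻¹ : ℝ) : ℂ) * ((pdR d j α x : ℝ) : ℂ)) * (((k⁻¹ : ℝ) : ℂ) * pd d j v x))).re := by
    rw [Finset.mul_sum, Complex.re_sum, Finset.mul_sum]
  -- the left-hand side
  have hLHS : 2 * ((starRingEnd ℂ) (Mop d k β α v x) * Lop d k v x).re
      = (∑ j, 2 * (k⁻¹) ^ 2 * ((starRingEnd ℂ) (Mop d k β α v x) * pd d j (pd d j v) x).re)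
        + 2 * ((starRingEnd ℂ) (Mop d k β α v x) * v x).re := by
    have l1 : (starRingEnd ℂ) (Mop d k β α v x) * Lop d k v x
        = (((k⁻¹) ^ 2 : ℝ) : ℂ)
            * (∑ j, (starRingEnd ℂ) (Mop d k β α v x) * pd d j (pd d j v) x)
          + (starRingEnd ℂ) (Mop d k β α v x) * v x := by
      have l0 : ((k ^ 2 : ℝ) : ℂ)⁻¹ = (((k⁻¹) ^ 2 : ℝ) : ℂ) := by
        norm_cast
        exact (inv_pow k 2).symm
      rw [show Lop d k v x
          = ((k ^ 2 : ℝ) : ℂ)⁻¹ * (∑ i, pd d i (pd d i v) x) + v x from rfl, l0,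
        mul_add, mul_left_comm ((starRingEnd ℂ) (Mop d k β α v x)) _ _, Finset.mul_sum]
    rw [l1, Complex.add_re, Complex.re_ofReal_mul, Complex.re_sum, Finset.mul_sum]
    rw [mul_add]
    congr 1
    · rw [Finset.mul_sum]
      exact Finset.sum_congr rfl (fun j _ => by ring)
  -- conj(M) * v
  have hMV : 2 * ((starRingEnd ℂ) (Mop d k β α v x) * v x).re
      = (∑ j, 2 * ((starRingEnd ℂ) (v x) * pd d j v x).re * x j) + 2 * α x * ‖v x‖ ^ 2 := by
    have m1 : (starRingEnd ℂ) (Mop d k β α v x) * v x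
        = (∑ i, ((x i : ℝ) : ℂ) * ((starRingEnd ℂ) (pd d i v x) * v x))
          + Complex.I * (k : ℂ) * ((β x : ℝ) : ℂ) * ((starRingEnd ℂ) (v x) * v x)
          + ((α x : ℝ) : ℂ) * ((starRingEnd ℂ) (v x) * v x) := by
      have hc : (starRingEnd ℂ) (∑ i, ((x i : ℝ) : ℂ) * pd d i v x) * v x
          = ∑ i, ((x i : ℝ) : ℂ) * ((starRingEnd ℂ) (pd d i v x) * v x) := by
        rw [map_sum, Finset.sum_mul]
        exact Finset.sum_congr rfl (fun i _ => by rw [map_mul, Complex.conj_ofReal]; ring)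
      rw [show Mop d k β α v x = (∑ i, ((x i : ℝ) : ℂ) * pd d i v x)
          - Complex.I * (k : ℂ) * ((β x : ℝ) : ℂ) * v x + ((α x : ℝ) : ℂ) * v x from rfl]
      simp only [map_add, map_sub, map_mul, Complex.conj_ofReal, Complex.conj_I]
      rw [add_mul, sub_mul, hc]
      ring
    rw [m1, Complex.add_re, Complex.add_re, Complex.re_sum, norm_sq_re (v x)]
    rw [mul_add, mul_add, Finset.mul_sum]
    have m2 : ∀ j : Fin d, 2 * (((x j : ℝ) : ℂ) * ((starRingEnd ℂ) (pd d j v x) * v x)).re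
        = 2 * ((starRingEnd ℂ) (v x) * pd d j v x).re * x j := by
      intro j
      simp only [Complex.mul_re, Complex.ofReal_re, Complex.ofReal_im,
        Complex.conj_re, Complex.conj_im]
      ring
    rw [Finset.sum_congr rfl (fun j _ => m2 j)]
    have m3 : (Complex.I * (k : ℂ) * ((β x : ℝ) : ℂ) * ((starRingEnd ℂ) (v x) * v x)).re
        = 0 := by
      simp only [Complex.mul_re, Complex.mul_im, Complex.I_re, Complex.I_im,
        Complex.ofReal_re, Complex.ofReal_im, Complex.conj_re, Complex.conj_im]
      ring
    have m4 : (((α x : ℝ) : ℂ) * ((starRingEnd ℂ) (v x) * v x)).re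
        = α x * ((starRingEnd ℂ) (v x) * v x).re := Complex.re_ofReal_mul _ _
    rw [m3, m4]
    ring
  -- assemble
  rw [Finset.sum_congr rfl (fun j _ => hfluxj j), hLHS, hMV, hβα]
  rw [Finset.sum_add_distrib, Finset.sum_sub_distrib, Finset.sum_add_distrib,
    Finset.sum_add_distrib, Finset.sum_add_distrib, Finset.sum_add_distrib]
  rw [hcancel]
  have hA4 : (∑ j, (2 + 2 * α x) * (k⁻¹) ^ 2 * ‖pd d j v x‖ ^ 2)
      = (2 + 2 * α x) * (k⁻¹) ^ 2 * gradSq d v x := by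
    rw [show gradSq d v x = ∑ j, ‖pd d j v x‖ ^ 2 from rfl, Finset.mul_sum]
  have hA7 : (∑ _j : Fin d, (‖v x‖ ^ 2 - (k⁻¹) ^ 2 * gradSq d v x))
      = (d : ℝ) * (‖v x‖ ^ 2 - (k⁻¹) ^ 2 * gradSq d v x) := by
    rw [Finset.sum_const, Finset.card_univ, Fintype.card_fin, nsmul_eq_mul]
  rw [hA4, hA7]
  ring

end
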